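/- Let X₁, X₂ be iid Pareto(α) with α ∈ (0,1], and let A₁, A₂ be events with ℙ(A₁) = ℙ(A₂), independent of (X₁,X₂). Then X₁·𝟙_{A₁} ≤_st (1/2)X₁𝟙_{A₁} + (1/2)X₂𝟙_{A₂}. -/

import Mathlib

open MeasureTheory ProbabilityTheory Set

/-- `X` is a Pareto(α) random variable under `P`: `P(X > t) = t^{-α}` for `t ≥ 1`,
and `X ≥ 1` almost surely. -/
def IsPareto {Ω : Type*} [MeasurableSpace Ω] (P : Measure Ω) (X : Ω → ℝ) (α : ℝ) : Prop :=
  Measurable X ∧ P {ω | 1 ≤ X ω} = 1 ∧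
    ∀ t : ℝ, 1 ≤ t → P {ω | t < X ω} = ENNReal.ofReal (t ^ (-α))

/-!
For `t ≥ 0`, the diversified loss exceeds `t` on `A₁ ∩ A₂` when `X₁ + X₂ > 2t`, on `A₁ \ A₂`
when `X₁ > 2t` and on `A₂ \ A₁` when `X₂ > 2t`; by independence and `P(A₁ \ A₂) = P(A₂ \ A₁)`
it suffices that `P(X₁ > t) ≤ P(X₁ + X₂ > 2t)` and `P(X₁ > t) ≤ 2 P(X₁ > 2t)`. The latter is
`2 ^ (1 - α) ≥ 1`. For the former with `t ≥ 1`, put `c = 2t - 1`: as `Xᵢ ≥ 1`, the sum exceeds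
`2t` once `max X₁ X₂ > c`, an event of probability `2v - v²` with `v = c ^ (-α)`, and Bernoulli's
inequality gives `t ^ (-α) ≤ 2v - v²`.
-/

namespace Real

lemma rpow_le_one_add_mul_sub_one {x α : ℝ} (hx : 0 ≤ x) (hα0 : 0 ≤ α) (hα1 : α ≤ 1) :
    x ^ α ≤ 1 + α * (x - 1) := by
  simpa using rpow_one_add_le_one_add_mul_self (s := x - 1) (by linarith) hα0 hα1

lemma rpow_neg_le_two_mul_sub_sq {α t : ℝ} (hα0 : 0 ≤ α) (hα1 : α ≤ 1) (ht : 1 ≤ t) :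
    t ^ (-α) ≤ 2 * (2 * t - 1) ^ (-α) - ((2 * t - 1) ^ (-α)) ^ 2 := by
  set c := 2 * t - 1
  have hc : t ≤ c := by linarith
  have ht0 : 0 < t := by linarith
  have hc0 : 0 < c := by linarith
  have hv : 0 ≤ c ^ (-α) := rpow_nonneg hc0.le _
  have hsplit : t ^ (-α) = c ^ (-α) * (c / t) ^ α := by
    rw [div_rpow hc0.le ht0.le, rpow_neg hc0.le, rpow_neg ht0.le]
    field_simp
  -- Bernoulli at `c / t = 2 - 1 / t` and at `1 / c` gives `(c / t) ^ α + c ^ (-α) ≤ 2`.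
  have hu : (c / t) ^ α ≤ 1 + α * (c / t - 1) :=
    rpow_le_one_add_mul_sub_one (by positivity) hα0 hα1
  have hw : c ^ (-α) ≤ 1 + α * (c⁻¹ - 1) := by
    rw [rpow_neg hc0.le, ← inv_rpow hc0.le]
    exact rpow_le_one_add_mul_sub_one (by positivity) hα0 hα1
  have hsum : c / t - 1 + (c⁻¹ - 1) ≤ 0 := by
    have : c / t = 2 - t⁻¹ := by field_simp; ring
    have : c⁻¹ ≤ t⁻¹ := inv_anti₀ ht0 hc
    linarith
  rw [hsplit]
  nlinarith [mul_le_mul_of_nonneg_left hsum hα0]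

lemma max_one_rpow_neg_le_two_mul {α : ℝ} (hα0 : 0 ≤ α) (hα1 : α ≤ 1) (t : ℝ) :
    max t 1 ^ (-α) ≤ 2 * max (2 * t) 1 ^ (-α) := by
  have h2 : (2 : ℝ)⁻¹ ≤ 2 ^ (-α) := by
    rw [← rpow_neg_one]
    exact rpow_le_rpow_of_exponent_le one_le_two (by linarith)
  have hmax : max (2 * t) 1 ≤ 2 * max t 1 := by
    rw [max_le_iff]; constructor <;> linarith [le_max_left t 1, le_max_right t 1]
  have hanti : (2 * max t 1) ^ (-α) ≤ max (2 * t) 1 ^ (-α) :=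
    rpow_le_rpow_of_nonpos (by positivity) hmax (by linarith)
  rw [mul_rpow zero_le_two (by positivity)] at hanti
  nlinarith [rpow_nonneg (zero_le_one.trans (le_max_right t 1)) (-α)]

end Real

lemma preimage_indicator_one_singleton_one {Ω : Type*} (A : Set Ω) :
    A.indicator (fun _ => (1 : ℝ)) ⁻¹' {1} = A :=
  ext fun _ => indicator_eq_one_iff_mem ℝ

section

variable {Ω : Type*} [MeasurableSpace Ω] {P : Measure Ω}

lemma measure_lt_mul_indicator {Y : Ω → ℝ} {A : Set Ω}
    (hind : IndepFun Y (A.indicator fun _ => (1 : ℝ)) P) {t : ℝ} (ht : 0 ≤ t) :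
    P {ω | t < Y ω * A.indicator (fun _ => (1 : ℝ)) ω} = P {ω | t < Y ω} * P A := by
  have hset : {ω | t < Y ω * A.indicator (fun _ => (1 : ℝ)) ω}
      = Y ⁻¹' Ioi t ∩ A.indicator (fun _ => (1 : ℝ)) ⁻¹' {1} := by
    rw [preimage_indicator_one_singleton_one]
    ext ω
    by_cases hω : ω ∈ A <;> simp [hω, ht.not_gt]
  rw [hset, hind.measure_inter_preimage_eq_mul _ _ measurableSet_Ioi (measurableSet_singleton 1),
    preimage_indicator_one_singleton_one]
  rfl

lemma measure_lt_half_mul_indicator_add_ge {Y₁ Y₂ : Ω → ℝ} {A₁ A₂ : Set Ω}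
    (hY₁ : Measurable Y₁) (hY₂ : Measurable Y₂) (hA₁ : MeasurableSet A₁) (hA₂ : MeasurableSet A₂)
    (hind : IndepFun (fun ω => (Y₁ ω, Y₂ ω))
      (fun ω => (A₁.indicator (fun _ => (1:ℝ)) ω, A₂.indicator (fun _ => (1:ℝ)) ω)) P)
    (t : ℝ) :
    P {ω | 2 * t < Y₁ ω + Y₂ ω} * P (A₁ ∩ A₂) + P {ω | 2 * t < Y₁ ω} * P (A₁ \ A₂)
        + P {ω | 2 * t < Y₂ ω} * P (A₂ \ A₁)
      ≤ P {ω | t < (1/2) * Y₁ ω * A₁.indicator (fun _ => (1:ℝ)) ω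
          + (1/2) * Y₂ ω * A₂.indicator (fun _ => (1:ℝ)) ω} := by
  set Y := fun ω => (Y₁ ω, Y₂ ω)
  set I := fun ω => (A₁.indicator (fun _ => (1:ℝ)) ω, A₂.indicator (fun _ => (1:ℝ)) ω)
  have hY : ∀ B : Set (ℝ × ℝ), MeasurableSet B →
      MeasurableSet[.comap Y inferInstance] (Y ⁻¹' B) := fun B hB => ⟨B, hB, rfl⟩
  have hI₁ : MeasurableSet[.comap I inferInstance] A₁ :=
    ⟨Prod.fst ⁻¹' {1}, measurable_fst (measurableSet_singleton 1),
      preimage_indicator_one_singleton_one A₁⟩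
  have hI₂ : MeasurableSet[.comap I inferInstance] A₂ :=
    ⟨Prod.snd ⁻¹' {1}, measurable_snd (measurableSet_singleton 1),
      preimage_indicator_one_singleton_one A₂⟩
  have hS : MeasurableSet[.comap Y inferInstance] {ω | 2 * t < Y₁ ω + Y₂ ω} :=
    hY {p | 2 * t < p.1 + p.2} (measurableSet_lt measurable_const (by fun_prop))
  have hS₁ : MeasurableSet[.comap Y inferInstance] {ω | 2 * t < Y₁ ω} :=
    hY (Prod.fst ⁻¹' Ioi (2 * t)) (measurable_fst measurableSet_Ioi)
  have hS₂ : MeasurableSet[.comap Y inferInstance] {ω | 2 * t < Y₂ ω} :=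
    hY (Prod.snd ⁻¹' Ioi (2 * t)) (measurable_snd measurableSet_Ioi)
  have hYm := (hY₁.prodMk hY₂).comap_le
  rw [← hind.meas_inter hS (hI₁.inter hI₂), ← hind.meas_inter hS₁ (hI₁.diff hI₂),
    ← hind.meas_inter hS₂ (hI₂.diff hI₁),
    ← measure_union _ ((hYm _ hS₁).inter (hA₁.diff hA₂)),
    ← measure_union _ ((hYm _ hS₂).inter (hA₂.diff hA₁))]
  · refine measure_mono ?_
    rintro ω ((⟨hω, h₁, h₂⟩ | ⟨hω, h₁, h₂⟩) | ⟨hω, h₂, h₁⟩)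
    · simp only [mem_ofPred_eq, indicator_of_mem h₁, indicator_of_mem h₂] at hω ⊢; linarith
    · simp only [mem_ofPred_eq, indicator_of_mem h₁, indicator_of_notMem h₂] at hω ⊢; linarith
    · simp only [mem_ofPred_eq, indicator_of_notMem h₁, indicator_of_mem h₂] at hω ⊢; linarith
  · refine disjoint_union_left.2 ⟨?_, ?_⟩
    · exact disjoint_left.2 fun ω ⟨_, h₁, _⟩ ⟨_, _, h₁'⟩ => h₁' h₁
    · exact disjoint_left.2 fun ω ⟨_, h₁, _⟩ ⟨_, _, h₁'⟩ => h₁' h₁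
  · exact disjoint_left.2 fun ω ⟨_, _, h₂⟩ ⟨_, _, h₂'⟩ => h₂' h₂

end

namespace IsPareto

variable {Ω : Type*} [MeasurableSpace Ω] {P : Measure Ω} [IsProbabilityMeasure P]
  {X Y : Ω → ℝ} {α : ℝ}

lemma ae_one_le (h : IsPareto P X α) : ∀ᵐ ω ∂P, 1 ≤ X ω :=
  (ae_iff_measure_eq (measurableSet_le measurable_const h.1).nullMeasurableSet).2
    (by rw [h.2.1, measure_univ])

lemma measure_lt (h : IsPareto P X α) (t : ℝ) :
    P {ω | t < X ω} = ENNReal.ofReal (max t 1 ^ (-α)) := by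
  rcases le_or_gt 1 t with ht | ht
  · rw [max_eq_left ht, h.2.2 t ht]
  · rw [max_eq_right ht.le, Real.one_rpow, ENNReal.ofReal_one]
    exact le_antisymm prob_le_one (h.2.1 ▸ measure_mono fun ω hω => ht.trans_le hω)

lemma measure_lt_le_add (hX : IsPareto P X α) (hY : IsPareto P Y α) (hα0 : 0 ≤ α) (hα1 : α ≤ 1)
    (t : ℝ) : P {ω | t < X ω} ≤ P {ω | 2 * t < X ω} + P {ω | 2 * t < Y ω} := by
  rw [hX.measure_lt, hX.measure_lt, hY.measure_lt,
    ← ENNReal.ofReal_add (by positivity) (by positivity)]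
  exact ENNReal.ofReal_le_ofReal (by linarith [Real.max_one_rpow_neg_le_two_mul hα0 hα1 t])

lemma measure_lt_le_measure_lt_add (hX : IsPareto P X α) (hY : IsPareto P Y α)
    (hind : IndepFun X Y P) (hα0 : 0 ≤ α) (hα1 : α ≤ 1) (t : ℝ) :
    P {ω | t < X ω} ≤ P {ω | 2 * t < X ω + Y ω} := by
  have hXY : ∀ᵐ ω ∂P, 1 ≤ X ω ∧ 1 ≤ Y ω := hX.ae_one_le.and hY.ae_one_le
  rcases lt_or_ge t 1 with ht | ht
  · calc P {ω | t < X ω} ≤ P univ := measure_mono (subset_univ _)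
      _ ≤ P {ω | 2 * t < X ω + Y ω} :=
        measure_mono_ae (hXY.mono fun ω h _ => show 2 * t < X ω + Y ω by linarith)
  set c := 2 * t - 1
  set v := c ^ (-α)
  have hc : 1 ≤ c := by linarith
  have hv0 : 0 ≤ v := by positivity
  have hv1 : v ≤ 1 := Real.rpow_le_one_of_one_le_of_nonpos hc (by linarith)
  have hXc : P (X ⁻¹' Ioi c) = ENNReal.ofReal v := hX.2.2 c hc
  have hYc : P (Y ⁻¹' Ioi c) = ENNReal.ofReal v := hY.2.2 c hc
  have hXc' : P (X ⁻¹' Iic c) = ENNReal.ofReal (1 - v) := by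
    rw [← compl_Ioi, preimage_compl, prob_compl_eq_one_sub (hX.1 measurableSet_Ioi), hXc,
      ENNReal.ofReal_sub _ hv0, ENNReal.ofReal_one]
  have hunion :
      P (X ⁻¹' Ioi c ∪ (X ⁻¹' Iic c ∩ Y ⁻¹' Ioi c)) = ENNReal.ofReal (v + (1 - v) * v) := by
    rw [measure_union, hind.measure_inter_preimage_eq_mul _ _ measurableSet_Iic measurableSet_Ioi,
      hXc, hXc', hYc, ← ENNReal.ofReal_mul (by linarith),
      ← ENNReal.ofReal_add hv0 (by nlinarith)]
    · exact disjoint_left.2 fun ω (h₁ : c < X ω) (h₂ : X ω ≤ c ∧ _) => h₂.1.not_gt h₁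
    · exact (hX.1 measurableSet_Iic).inter (hY.1 measurableSet_Ioi)
  calc P {ω | t < X ω} = ENNReal.ofReal (t ^ (-α)) := hX.2.2 t ht
    _ ≤ ENNReal.ofReal (v + (1 - v) * v) :=
      ENNReal.ofReal_le_ofReal (by linarith [Real.rpow_neg_le_two_mul_sub_sq hα0 hα1 ht])
    _ = P (X ⁻¹' Ioi c ∪ (X ⁻¹' Iic c ∩ Y ⁻¹' Ioi c)) := hunion.symm
    _ ≤ P {ω | 2 * t < X ω + Y ω} := by
      refine measure_mono_ae (hXY.mono fun ω h hω => show 2 * t < X ω + Y ω from ?_)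
      rcases hω with (hω : c < X ω) | ⟨-, hω : c < Y ω⟩ <;> linarith

end IsPareto

/-- Two catastrophic losses triggered with equal probabilities: for iid Pareto(α),
`α ∈ (0,1]`, and events `A₁, A₂` with `P(A₁) = P(A₂)` independent of `(X₁, X₂)`,
`X₁·𝟙_{A₁} ≤_st ½X₁𝟙_{A₁} + ½X₂𝟙_{A₂}`. -/
theorem stmt13 {Ω : Type*} [MeasurableSpace Ω] (P : Measure Ω) [IsProbabilityMeasure P]
    (α : ℝ) (hα : α ∈ Set.Ioc (0:ℝ) 1)
    (X₁ X₂ : Ω → ℝ) (hX₁ : IsPareto P X₁ α) (hX₂ : IsPareto P X₂ α)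
    (hind : IndepFun X₁ X₂ P)
    (A₁ A₂ : Set Ω) (hA₁ : MeasurableSet A₁) (hA₂ : MeasurableSet A₂)
    (hPA : P A₁ = P A₂)
    (hindA : IndepFun (fun ω => (X₁ ω, X₂ ω))
      (fun ω => (A₁.indicator (fun _ => (1:ℝ)) ω, A₂.indicator (fun _ => (1:ℝ)) ω)) P) :
    ∀ t : ℝ, P {ω | t < X₁ ω * A₁.indicator (fun _ => (1:ℝ)) ω}
      ≤ P {ω | t < (1/2) * X₁ ω * A₁.indicator (fun _ => (1:ℝ)) ω
          + (1/2) * X₂ ω * A₂.indicator (fun _ => (1:ℝ)) ω} := by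
  obtain ⟨hα0, hα1⟩ := hα
  intro t
  rcases lt_or_ge t 0 with ht | ht
  · refine (measure_mono (subset_univ _)).trans (measure_mono_ae ?_)
    filter_upwards [hX₁.ae_one_le, hX₂.ae_one_le] with ω h₁ h₂ _
    have hI₁ := indicator_nonneg (fun _ _ => zero_le_one) ω (s := A₁) (f := fun _ => (1:ℝ))
    have hI₂ := indicator_nonneg (fun _ _ => zero_le_one) ω (s := A₂) (f := fun _ => (1:ℝ))
    show t < _
    nlinarith
  have hdiff : P (A₂ \ A₁) = P (A₁ \ A₂) :=
    (measure_sdiff_symm hA₁.nullMeasurableSet hA₂.nullMeasurableSet hPA (by finiteness)).symm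
  calc P {ω | t < X₁ ω * A₁.indicator (fun _ => (1:ℝ)) ω}
      = P {ω | t < X₁ ω} * P (A₁ ∩ A₂) + P {ω | t < X₁ ω} * P (A₁ \ A₂) := by
        have hind₁ : IndepFun X₁ (A₁.indicator fun _ => (1:ℝ)) P :=
          hindA.comp measurable_fst measurable_fst
        rw [measure_lt_mul_indicator hind₁ ht,
          ← mul_add, measure_inter_add_sdiff A₁ hA₂]
    _ ≤ P {ω | 2 * t < X₁ ω + X₂ ω} * P (A₁ ∩ A₂)
          + (P {ω | 2 * t < X₁ ω} + P {ω | 2 * t < X₂ ω}) * P (A₁ \ A₂) := by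
        gcongr ?_ * _ + ?_ * _
        · exact hX₁.measure_lt_le_measure_lt_add hX₂ hind hα0.le hα1 t
        · exact hX₁.measure_lt_le_add hX₂ hα0.le hα1 t
    _ = P {ω | 2 * t < X₁ ω + X₂ ω} * P (A₁ ∩ A₂) + P {ω | 2 * t < X₁ ω} * P (A₁ \ A₂)
          + P {ω | 2 * t < X₂ ω} * P (A₂ \ A₁) := by
        rw [hdiff, add_mul, add_assoc]
    _ ≤ _ := measure_lt_half_mul_indicator_add_ge hX₁.1 hX₂.1 hA₁ hA₂ hindA t
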